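/- In the multi-class case (the columns y₁,…,y_m ∈ {0,1}ⁿ have pairwise disjoint supports whose union is [n]), a ternary Huffman tree T for the weights pⱼ = ‖yⱼ‖₁/n satisfies c(T) ≤ n + (3n/log₂ 3)·H(p₁,…,p_m) + 3n, and hence c(T) ≤ min_{T'} c(T') + 3n. -/

import Mathlib

/-!
Upper bound: a leaf of weight `w > 0` gets depth `d = ⌊log₃ (n / w)⌋ + 1`, so that `n < w·3^d`
and the Kraft sum `∑ 3^(-d)` stays below `1`. Sorting by depth, the leaves can be packed greedily
into three bins of Kraft sum `≤ 1/3` each (a bin that refuses the next leaf is exactly full, as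
the sizes `3^(-d)` form a divisibility chain), which by recursion yields a ternary tree with every
leaf at depth `≤ d`; the spare slot takes a comb of all weightless leaves. A node costs at most
`3‖z_v‖₁`, so `c(T) ≤ ∑ 3 w d ≤ 3n + (3 / ln 3) ∑ w ln (n / w)`.

Lower bound: with disjoint supports `‖z_v‖₁` is the total weight below `v`, and the chain rule
splits the entropy of the leaves below `v` into that of its children plus the entropy of the
children's weights, which is at most `‖z_v‖₁ ln deg v ≤ ‖z_v‖₁ deg v · (ln 3) / 3` as `k³ ≤ 3^k`.
-/

/-- A rooted tree with leaves labeled by `α`. -/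
inductive RTree (α : Type) where
  | leaf : α → RTree α
  | node : List (RTree α) → RTree α

namespace RTree

/-- The list of leaf labels of a tree. -/
def leaves {α : Type} : RTree α → List α
  | .leaf a => [a]
  | .node ts => (ts.attach.map (fun ⟨t, _⟩ => t.leaves)).flatten

/-- Depth of the tree: maximum number of edges on a root-to-leaf path. -/
def depth {α : Type} : RTree α → ℕ
  | .leaf _ => 0
  | .node ts => 1 + (ts.attach.map (fun ⟨t, _⟩ => t.depth)).foldr max 0

/-- Maximum degree (number of children) over all nodes. -/
def maxdeg {α : Type} : RTree α → ℕ
  | .leaf _ => 0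
  | .node ts => max ts.length ((ts.attach.map (fun ⟨t, _⟩ => t.maxdeg)).foldr max 0)

end RTree

/-- Hamming weight of a binary vector. -/
def hw {n : ℕ} (z : Fin n → Bool) : ℕ := (Finset.univ.filter (fun i => z i = true)).card

/-- Coordinatewise OR of a list of binary vectors. -/
def orv {n : ℕ} (ys : List (Fin n → Bool)) : Fin n → Bool := fun i => ys.any (fun y => y i)

/-- `∑_{v ∈ V(T)} ‖z_v‖₁ · deg(v)`, where `z_v` is the OR of the leaf labels below `v`
and `deg(v)` the number of children of `v` (0 for leaves). -/
def RTree.cost {n : ℕ} : RTree (Fin n → Bool) → ℕ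
  | .leaf _ => 0
  | .node ts => hw (orv (RTree.leaves (.node ts))) * ts.length
      + (ts.attach.map (fun ⟨t, _⟩ => t.cost)).sum

open Function

namespace RTree

variable {α : Type}

instance : Inhabited (RTree α) := ⟨node []⟩

@[elab_as_elim]
theorem induction {motive : RTree α → Prop} (leaf : ∀ a, motive (leaf a))
    (node : ∀ ts, (∀ t ∈ ts, motive t) → motive (node ts)) : ∀ t, motive t
  | .leaf a => leaf a
  | .node ts => node ts fun t _ => induction leaf node t

@[simp] theorem leaves_leaf (a : α) : (leaf a).leaves = [a] := by
  simp [leaves]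

@[simp] theorem leaves_node (ts : List (RTree α)) :
    (node ts).leaves = (ts.map leaves).flatten := by
  simp [leaves]

@[simp] theorem maxdeg_leaf (a : α) : (leaf a).maxdeg = 0 := by
  simp [maxdeg]

@[simp] theorem maxdeg_node (ts : List (RTree α)) :
    (node ts).maxdeg = max ts.length ((ts.map maxdeg).foldr max 0) := by
  simp [maxdeg]

theorem maxdeg_node_le_iff {ts : List (RTree α)} {r : ℕ} :
    (node ts).maxdeg ≤ r ↔ ts.length ≤ r ∧ ∀ t ∈ ts, t.maxdeg ≤ r := by
  rw [maxdeg_node, max_le_iff]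
  congr! 1
  induction ts <;> simp [*]

def comb : List α → RTree α
  | [] => node []
  | a :: l => node [leaf a, comb l]

@[simp] theorem leaves_comb (l : List α) : (comb l).leaves = l := by
  induction l <;> simp [comb, *]

theorem maxdeg_comb_le (l : List α) : (comb l).maxdeg ≤ 2 := by
  induction l with
  | nil => simp [comb]
  | cons a l ih => simp [comb, ih]

end RTree

section BoolVector

variable {n : ℕ}

def boolSupport (z : Fin n → Bool) : Finset (Fin n) := Finset.univ.filter fun i => z i = true

theorem hw_eq_card_boolSupport (z : Fin n → Bool) : hw z = (boolSupport z).card := rfl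

theorem boolSupport_orv_cons (a : Fin n → Bool) (l : List (Fin n → Bool)) :
    boolSupport (orv (a :: l)) = boolSupport a ∪ boolSupport (orv l) := by
  ext i
  simp [boolSupport, orv]

theorem mem_boolSupport_orv {l : List (Fin n → Bool)} {i : Fin n} :
    i ∈ boolSupport (orv l) ↔ ∃ y ∈ l, i ∈ boolSupport y := by
  simp [boolSupport, orv]

@[simp] theorem hw_orv_nil : hw (orv ([] : List (Fin n → Bool))) = 0 := by
  simp [hw, orv]

theorem hw_orv_le_sum (l : List (Fin n → Bool)) : hw (orv l) ≤ (l.map hw).sum := by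
  induction l with
  | nil => simp
  | cons a l ih =>
    rw [hw_eq_card_boolSupport, boolSupport_orv_cons, List.map_cons, List.sum_cons]
    exact (Finset.card_union_le _ _).trans (Nat.add_le_add_left ih _)

theorem hw_orv_eq_sum {l : List (Fin n → Bool)} (h : l.Pairwise (Disjoint on boolSupport)) :
    hw (orv l) = (l.map hw).sum := by
  induction l with
  | nil => simp
  | cons a l ih =>
    rw [List.pairwise_cons] at h
    have hdisj : Disjoint (boolSupport a) (boolSupport (orv l)) :=
      Finset.disjoint_right.mpr fun i hi => by
        obtain ⟨y, hy, hiy⟩ := mem_boolSupport_orv.mp hi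
        exact Finset.disjoint_right.mp (h.1 y hy) hiy
    rw [hw_eq_card_boolSupport, boolSupport_orv_cons, Finset.card_union_of_disjoint hdisj,
      ← hw_eq_card_boolSupport, ← hw_eq_card_boolSupport, ih h.2, List.map_cons, List.sum_cons]

theorem pairwise_disjoint_boolSupport_of_countP_le_one {ys : List (Fin n → Bool)}
    (h : ∀ i, ys.countP (fun y => y i) ≤ 1) : ys.Pairwise (Disjoint on boolSupport) := by
  induction ys with
  | nil => exact List.Pairwise.nil
  | cons a l ih =>
    refine List.Pairwise.cons (fun b hb => Finset.disjoint_left.mpr fun i hia hib => ?_)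
      (ih fun i => ((List.sublist_cons_self a l).countP_le).trans (h i))
    have hcount := h i
    simp only [boolSupport, Finset.mem_filter, Finset.mem_univ, true_and] at hia hib
    rw [List.countP_cons_of_pos (p := fun y : Fin n → Bool => y i) hia] at hcount
    have := (List.countP_pos_iff (p := fun y : Fin n → Bool => y i)).mpr ⟨b, hb, hib⟩
    omega

theorem sum_hw_eq_of_countP_eq_one {ys : List (Fin n → Bool)}
    (h : ∀ i, ys.countP (fun y => y i) = 1) : (ys.map hw).sum = n := by
  rw [← hw_orv_eq_sum (pairwise_disjoint_boolSupport_of_countP_le_one fun i => (h i).le),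
    hw_eq_card_boolSupport, Finset.eq_univ_of_forall (s := boolSupport (orv ys)) fun i => ?_,
    Finset.card_univ, Fintype.card_fin]
  obtain ⟨y, hy, hyi⟩ := List.countP_pos_iff.mp (h i ▸ Nat.one_pos)
  exact mem_boolSupport_orv.mpr ⟨y, hy, by simpa [boolSupport] using hyi⟩

end BoolVector

namespace RTree

variable {n : ℕ}

@[simp] theorem cost_leaf (a : Fin n → Bool) : (leaf a).cost = 0 := by
  simp [cost]

@[simp] theorem cost_node (ts : List (RTree (Fin n → Bool))) :
    (node ts).cost = hw (orv (ts.map leaves).flatten) * ts.length + (ts.map cost).sum := by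
  simp [cost]

def weight (t : RTree (Fin n → Bool)) : ℕ := (t.leaves.map hw).sum

@[simp] theorem weight_leaf (a : Fin n → Bool) : (leaf a).weight = hw a := by
  simp [weight]

theorem weight_node (ts : List (RTree (Fin n → Bool))) :
    (node ts).weight = (ts.map weight).sum := by
  simp [weight, List.map_flatten, List.sum_flatten, Function.comp_def]
  rfl

theorem hw_orv_leaves_le_weight (t : RTree (Fin n → Bool)) : hw (orv t.leaves) ≤ t.weight :=
  hw_orv_le_sum _

theorem cost_eq_zero_of_weight_eq_zero {t : RTree (Fin n → Bool)} (h : t.weight = 0) :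
    t.cost = 0 := by
  induction t using RTree.induction with
  | leaf a => simp
  | node ts ih =>
    have hroot := (node ts).hw_orv_leaves_le_weight
    rw [h, Nat.le_zero, leaves_node] at hroot
    rw [weight_node, List.sum_eq_zero_iff] at h
    simp only [cost_node, hroot, zero_mul, zero_add, List.sum_eq_zero_iff, List.mem_map]
    rintro _ ⟨c, hc, rfl⟩
    exact ih c hc (h _ (List.mem_map_of_mem hc))

end RTree

/-- `S · H(a / S)` in nats, where `S = l.sum`. -/
noncomputable def massEntropy (l : List ℝ) : ℝ := (l.map fun a => a * Real.log (l.sum / a)).sum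

theorem List.Perm.massEntropy_eq {l₁ l₂ : List ℝ} (h : l₁.Perm l₂) :
    massEntropy l₁ = massEntropy l₂ := by
  rw [massEntropy, massEntropy, h.sum_eq]
  exact (h.map _).sum_eq

theorem massEntropy_add_sum_mul_log {l : List ℝ} (hl : ∀ a ∈ l, 0 ≤ a) :
    massEntropy l + (l.map fun a => a * Real.log a).sum = l.sum * Real.log l.sum := by
  have hterm : ∀ a ∈ l, a * Real.log (l.sum / a) + a * Real.log a = a * Real.log l.sum := by
    intro a ha
    rcases (hl a ha).eq_or_lt with rfl | hpos
    · simp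
    · rw [Real.log_div (hpos.trans_le (List.single_le_sum hl a ha)).ne' hpos.ne']
      ring
  rw [massEntropy, ← List.sum_map_add, List.map_congr_left hterm, List.sum_map_mul_right,
    List.map_id']

theorem massEntropy_flatten {ls : List (List ℝ)} (hls : ∀ l ∈ ls, ∀ a ∈ l, 0 ≤ a) :
    massEntropy ls.flatten = (ls.map massEntropy).sum + massEntropy (ls.map List.sum) := by
  have hflat := massEntropy_add_sum_mul_log (l := ls.flatten) fun a ha => by
    obtain ⟨l, hl, ha⟩ := List.mem_flatten.mp ha
    exact hls l hl a ha
  have hparts : (ls.map massEntropy).sum + (ls.flatten.map fun a => a * Real.log a).sum =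
      (ls.map fun l => l.sum * Real.log l.sum).sum := by
    rw [List.map_flatten, List.sum_flatten, List.map_map, ← List.sum_map_add]
    exact congrArg List.sum <| List.map_congr_left fun l hl =>
      massEntropy_add_sum_mul_log (hls l hl)
  have hsums := massEntropy_add_sum_mul_log (l := ls.map List.sum) <| by
    simpa using fun l hl => List.sum_nonneg (hls l hl)
  rw [List.sum_flatten] at hflat
  rw [List.map_map] at hsums
  simp only [Function.comp_def] at hsums
  linarith

theorem massEntropy_le_sum_mul_log_length {l : List ℝ} (hl : ∀ a ∈ l, 0 ≤ a) :
    massEntropy l ≤ l.sum * Real.log l.length := by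
  by_cases hne : l = []
  · simp [hne, massEntropy]
  set S := l.sum
  have hk : (0 : ℝ) < l.length := by exact_mod_cast List.length_pos_iff.mpr hne
  -- `log x ≤ x - 1` at `x = S / (k a)`
  have hterm : ∀ a ∈ l, a * Real.log (S / a) + a ≤ a * Real.log l.length + S / l.length := by
    intro a ha
    rcases (hl a ha).eq_or_lt with rfl | hpos
    · simpa using div_nonneg (List.sum_nonneg hl) hk.le
    have hS : 0 < S := hpos.trans_le (List.single_le_sum hl a ha)
    have h := Real.log_le_sub_one_of_pos (by positivity : 0 < S / (l.length * a))
    rw [Real.log_div hS.ne' (by positivity), Real.log_mul hk.ne' hpos.ne'] at h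
    rw [Real.log_div hS.ne' hpos.ne']
    have : a * (S / (l.length * a) - 1) = S / l.length - a := by field_simp
    nlinarith
  have hsum := List.sum_le_sum hterm
  simp only [List.sum_map_add, List.sum_map_mul_right, List.map_id', List.map_const',
    List.sum_replicate, nsmul_eq_mul, mul_div_cancel₀ _ hk.ne'] at hsum
  rw [massEntropy]
  linarith

theorem massEntropy_flatten_le {ls : List (List ℝ)} (hls : ∀ l ∈ ls, ∀ a ∈ l, 0 ≤ a) :
    massEntropy ls.flatten ≤ (ls.map massEntropy).sum + ls.flatten.sum * Real.log ls.length := by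
  rw [massEntropy_flatten hls, List.sum_flatten]
  simpa using massEntropy_le_sum_mul_log_length (l := ls.map List.sum) <| by
    simpa using fun l hl => List.sum_nonneg (hls l hl)

theorem Nat.cube_le_three_pow (k : ℕ) : k ^ 3 ≤ 3 ^ k := by
  induction k with
  | zero => norm_num
  | succ k ih =>
    rcases Nat.lt_or_ge k 3 with hk | hk
    · interval_cases k <;> norm_num
    · calc (k + 1) ^ 3 ≤ 3 * k ^ 3 := by nlinarith [Nat.mul_le_mul hk hk]
        _ ≤ 3 * 3 ^ k := by omega
        _ = 3 ^ (k + 1) := by ring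

theorem three_div_log_three_mul_log_le (k : ℕ) : 3 / Real.log 3 * Real.log k ≤ k := by
  rcases k.eq_zero_or_pos with rfl | hk
  · simp
  have h := Real.log_le_log (by positivity) (show (k : ℝ) ^ 3 ≤ 3 ^ k by
    exact_mod_cast k.cube_le_three_pow)
  rw [Real.log_pow, Real.log_pow] at h
  rw [div_mul_eq_mul_div, div_le_iff₀ (Real.log_pos (by norm_num))]
  exact_mod_cast h

theorem RTree.massEntropy_le_cost {n : ℕ} (t : RTree (Fin n → Bool))
    (ht : t.leaves.Pairwise (Disjoint on boolSupport)) :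
    3 / Real.log 3 * massEntropy (t.leaves.map fun y => (hw y : ℝ)) ≤ t.cost := by
  induction t using RTree.induction with
  | leaf a => simp [massEntropy]
  | node ts ih =>
    set ls := ts.map fun c => c.leaves.map fun y => (hw y : ℝ)
    have hleaves : (node ts).leaves.map (fun y => (hw y : ℝ)) = ls.flatten := by
      simp [ls, List.map_flatten, Function.comp_def]
    have hroot : ls.flatten.sum = hw (orv (ts.map leaves).flatten) := by
      rw [← hleaves, ← leaves_node, hw_orv_eq_sum ht, Nat.cast_list_sum, List.map_map]
      rfl
    have hchildren : 3 / Real.log 3 * (ls.map massEntropy).sum ≤ ((ts.map cost).sum : ℝ) := by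
      rw [← List.sum_map_mul_left, Nat.cast_list_sum, List.map_map, List.map_map]
      refine List.sum_le_sum fun c hc => ih c hc (ht.sublist ?_)
      rw [leaves_node]
      exact List.sublist_flatten_of_mem (List.mem_map_of_mem hc)
    have hnonneg : ∀ l ∈ ls, ∀ a ∈ l, 0 ≤ a := by
      simp only [ls, List.mem_map]
      rintro _ ⟨c, -, rfl⟩ a ha
      obtain ⟨y, -, rfl⟩ := List.mem_map.mp ha
      positivity
    have hentropy := massEntropy_flatten_le hnonneg
    rw [List.length_map] at hentropy
    have hS : 0 ≤ ls.flatten.sum := List.sum_nonneg fun a ha => by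
      obtain ⟨l, hl, ha⟩ := List.mem_flatten.mp ha
      exact hnonneg l hl a ha
    rw [hleaves, cost_node, Nat.cast_add, Nat.cast_mul, ← hroot]
    calc 3 / Real.log 3 * massEntropy ls.flatten
        ≤ 3 / Real.log 3 * ((ls.map massEntropy).sum + ls.flatten.sum * Real.log ts.length) := by
          gcongr
      _ = 3 / Real.log 3 * (ls.map massEntropy).sum
            + ls.flatten.sum * (3 / Real.log 3 * Real.log ts.length) := by ring
      _ ≤ ((ts.map cost).sum : ℝ) + ls.flatten.sum * ts.length := by
          gcongr
          exact three_div_log_three_mul_log_le ts.length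
      _ = _ := add_comm _ _

section Packing

variable {α : Type*} (f : α → ℕ)

theorem exists_prefix_sum_le (c : ℕ) (l : List α) (hl : l.Pairwise fun a b => f b ∣ f a)
    (hc : ∀ a ∈ l, f a ∣ c) :
    ∃ A B, l = A ++ B ∧ (A.map f).sum ≤ c ∧ (B = [] ∨ (A.map f).sum = c) := by
  induction l generalizing c with
  | nil => exact ⟨[], [], rfl, by simp, Or.inl rfl⟩
  | cons a l ih =>
    rw [List.pairwise_cons] at hl
    by_cases ha : f a ≤ c
    · obtain ⟨A, B, rfl, hA, hB⟩ := ih (c - f a) hl.2 fun b hb =>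
        Nat.dvd_sub (hc b (List.mem_cons_of_mem a hb)) (hl.1 b hb)
      refine ⟨a :: A, B, rfl, by simp; omega, ?_⟩
      simp only [List.map_cons, List.sum_cons]
      exact hB.imp_right fun h => by omega
    · -- `f a ∣ c < f a` forces `c = 0`
      refine ⟨[], a :: l, rfl, by simp, Or.inr ?_⟩
      simp [Nat.eq_zero_of_dvd_of_lt (hc a List.mem_cons_self) (not_le.mp ha)]

theorem exists_parts_sum_le (c : ℕ) {k : ℕ} (hk : 0 < k) (l : List α)
    (hl : l.Pairwise fun a b => f b ∣ f a) (hc : ∀ a ∈ l, f a ∣ c)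
    (hsum : (l.map f).sum ≤ k * c) :
    ∃ parts : List (List α), parts.length = k ∧ parts.flatten = l ∧
      ∀ P ∈ parts, (P.map f).sum ≤ c := by
  induction k, hk using Nat.le_induction generalizing l with
  | base => exact ⟨[l], rfl, by simp, by simpa using hsum⟩
  | succ k _ ih =>
    obtain ⟨A, B, rfl, hA, hB⟩ := exists_prefix_sum_le f c l hl hc
    have hBsum : (B.map f).sum ≤ k * c := by
      rcases hB with rfl | hB
      · simp
      · rw [List.map_append, List.sum_append, hB, Nat.succ_mul] at hsum
        omega
    obtain ⟨parts, hlen, rfl, hparts⟩ := ih B (List.pairwise_append.mp hl).2.1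
      (fun b hb => hc b (List.mem_append_right A hb)) hBsum
    exact ⟨A :: parts, by simp [hlen], rfl, by simpa [hA] using hparts⟩

end Packing

theorem one_le_snd_of_kraft_sum_le {β : Type*} {r D : ℕ} (hr : 0 < r) {L : List (β × ℕ)}
    (hL : 2 ≤ L.length) (hsorted : L.Pairwise fun p q => p.2 ≤ q.2)
    (hkraft : (L.map fun p => r ^ (D - p.2)).sum ≤ r ^ D) : ∀ x ∈ L, 1 ≤ x.2 := by
  rcases L with _ | ⟨p, _ | ⟨q, L⟩⟩
  · simp at hL
  · simp at hL
  have hp : 1 ≤ p.2 := by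
    by_contra h
    simp only [List.map_cons, List.sum_cons, Nat.lt_one_iff.mp (not_le.mp h), Nat.sub_zero]
      at hkraft
    have : 0 < r ^ (D - q.2) := Nat.pow_pos hr
    omega
  intro x hx
  rcases List.mem_cons.mp hx with rfl | hx
  · exact hp
  · exact hp.trans (List.rel_of_pairwise_cons hsorted hx)

namespace RTree

variable {n : ℕ}

theorem weight_eq_of_perm {s t : RTree (Fin n → Bool)} (h : s.leaves.Perm t.leaves) :
    s.weight = t.weight :=
  (h.map hw).sum_eq

/-- The cost bound of an `r`-ary tree in which each `p.1` hangs at depth `p.2`. -/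
def IsKraftTree (r : ℕ) (L : List (RTree (Fin n → Bool) × ℕ)) (t : RTree (Fin n → Bool)) :
    Prop :=
  t.leaves.Perm (L.map fun p => p.1.leaves).flatten ∧ t.maxdeg ≤ r ∧
    t.cost ≤ (L.map fun p => p.1.cost + r * p.1.weight * p.2).sum

theorem IsKraftTree.of_perm {r : ℕ} {L L' : List (RTree (Fin n → Bool) × ℕ)}
    {t : RTree (Fin n → Bool)} (ht : IsKraftTree r L t) (h : L.Perm L') : IsKraftTree r L' t :=
  ⟨ht.1.trans (h.map _).flatten, ht.2.1, ht.2.2.trans_eq (h.map _).sum_eq⟩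

theorem exists_isKraftTree_of_length_le_one {r : ℕ} {L : List (RTree (Fin n → Bool) × ℕ)}
    (hL : L.length ≤ 1) (hdeg : ∀ p ∈ L, p.1.maxdeg ≤ r) : ∃ t, IsKraftTree r L t := by
  match L, hL with
  | [], _ => exact ⟨node [], by simp [IsKraftTree]⟩
  | [p], _ => exact ⟨p.1, by simpa [IsKraftTree] using hdeg p List.mem_cons_self⟩

theorem IsKraftTree.mul_weight_add_cost_le {r : ℕ} {P : List (RTree (Fin n → Bool) × ℕ)}
    {t : RTree (Fin n → Bool)} (ht : IsKraftTree r (P.map fun p => (p.1, p.2 - 1)) t)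
    (hd : ∀ p ∈ P, 1 ≤ p.2) :
    r * t.weight + t.cost ≤ (P.map fun p => p.1.cost + r * p.1.weight * p.2).sum := by
  obtain ⟨hleaves, -, hcost⟩ := ht
  have hweight : t.weight = (P.map fun p => p.1.weight).sum := by
    rw [weight_eq_of_perm (t := node (P.map Prod.fst)) (by simpa [Function.comp_def] using hleaves),
      weight_node, List.map_map]
    rfl
  simp only [List.map_map, Function.comp_def] at hcost
  calc r * t.weight + t.cost
      ≤ r * (P.map fun p => p.1.weight).sum
          + (P.map fun p => p.1.cost + r * p.1.weight * (p.2 - 1)).sum := by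
        rw [hweight]
        gcongr
    _ = _ := by
      rw [← List.sum_map_mul_left, ← List.sum_map_add]
      refine congrArg List.sum (List.map_congr_left fun p hp => ?_)
      obtain ⟨d, hd'⟩ := Nat.exists_eq_add_of_le' (hd p hp)
      rw [hd', Nat.add_sub_cancel]
      ring

theorem isKraftTree_node {r : ℕ} {parts : List (List (RTree (Fin n → Bool) × ℕ))}
    (hlen : parts.length = r) (hd : ∀ P ∈ parts, ∀ p ∈ P, 1 ≤ p.2)
    {g : List (RTree (Fin n → Bool) × ℕ) → RTree (Fin n → Bool)}
    (hg : ∀ P ∈ parts, IsKraftTree r (P.map fun p => (p.1, p.2 - 1)) (g P)) :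
    IsKraftTree r parts.flatten (node (parts.map g)) := by
  refine ⟨?_, ?_, ?_⟩
  · have := List.Perm.flatMap_left parts fun P hP => (hg P hP).1
    simpa [List.flatMap_def, List.map_flatten, List.flatten_flatten, Function.comp_def]
      using this
  · rw [maxdeg_node_le_iff]
    simpa [hlen] using fun P hP => (hg P hP).2.1
  calc (node (parts.map g)).cost
      ≤ (node (parts.map g)).weight * r + (parts.map fun P => (g P).cost).sum := by
        have hroot := hw_orv_leaves_le_weight (node (parts.map g))
        rw [leaves_node] at hroot
        rw [cost_node, List.length_map, hlen]
        simp only [List.map_map] at hroot ⊢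
        exact Nat.add_le_add_right (Nat.mul_le_mul_right r hroot) _
    _ = (parts.map fun P => r * (g P).weight + (g P).cost).sum := by
        rw [weight_node, List.sum_map_add, List.sum_map_mul_left, List.map_map, mul_comm]
        rfl
    _ ≤ (parts.map fun P => (P.map fun p => p.1.cost + r * p.1.weight * p.2).sum).sum :=
        List.sum_le_sum fun P hP => (hg P hP).mul_weight_add_cost_le (hd P hP)
    _ = _ := by
        rw [List.map_flatten, List.sum_flatten, List.map_map]
        rfl

theorem exists_isKraftTree {r : ℕ} (hr : 0 < r) (D : ℕ) (L : List (RTree (Fin n → Bool) × ℕ))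
    (hdeg : ∀ p ∈ L, p.1.maxdeg ≤ r) (hkraft : (L.map fun p => r ^ (D - p.2)).sum ≤ r ^ D) :
    ∃ t, IsKraftTree r L t := by
  induction D generalizing L with
  | zero =>
    refine exists_isKraftTree_of_length_le_one ?_ hdeg
    simpa [List.map_const'] using hkraft
  | succ D ih =>
    by_cases hL : L.length ≤ 1
    · exact exists_isKraftTree_of_length_le_one hL hdeg
    set L' := L.mergeSort fun p q => decide (p.2 ≤ q.2)
    have hperm : L'.Perm L := List.mergeSort_perm _ _
    have hsorted : L'.Pairwise fun p q => p.2 ≤ q.2 := by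
      simpa using List.pairwise_mergeSort (le := fun p q : RTree (Fin n → Bool) × ℕ =>
        decide (p.2 ≤ q.2)) (fun a b c => by simpa using le_trans) (fun a b => by
          simpa using le_total a.2 b.2) L
    rw [← (hperm.map _).sum_eq] at hkraft
    have hd := one_le_snd_of_kraft_sum_le hr (by rw [hperm.length_eq]; omega) hsorted hkraft
    obtain ⟨parts, hlen, hflat, hparts⟩ := exists_parts_sum_le (fun p => r ^ (D + 1 - p.2))
      (r ^ D) hr L' (hsorted.imp fun h => pow_dvd_pow r (by omega))
      (fun p hp => pow_dvd_pow r (by have := hd p hp; omega)) (by rwa [← pow_succ'])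
    have hmem : ∀ P ∈ parts, ∀ p ∈ P, p ∈ L' := fun P hP p hp =>
      hflat ▸ List.mem_flatten_of_mem hP hp
    have hsub : ∀ P ∈ parts, ∃ t, IsKraftTree r (P.map fun p => (p.1, p.2 - 1)) t := by
      intro P hP
      refine ih _ ?_ ?_
      · simp only [List.mem_map]
        rintro _ ⟨p, hp, rfl⟩
        exact hdeg p (hperm.mem_iff.mp (hmem P hP p hp))
      refine le_of_eq_of_le (congrArg List.sum ?_) (hparts P hP)
      simp only [List.map_map]
      refine List.map_congr_left fun p hp => ?_
      have := hd p (hmem P hP p hp)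
      simp only [Function.comp_apply]
      congr 1
      omega
    choose! g hg using hsub
    refine ⟨_, (isKraftTree_node hlen (fun P hP p hp => hd p (hmem P hP p hp)) hg).of_perm ?_⟩
    rw [hflat]
    exact hperm

end RTree

section Shannon

def shannonDepth (S w : ℕ) : ℕ := Nat.log 3 (S / w) + 1

variable {S w : ℕ}

theorem lt_mul_three_pow_shannonDepth (hw : 0 < w) : S < w * 3 ^ shannonDepth S w := by
  rw [mul_comm, ← Nat.div_lt_iff_lt_mul hw]
  exact Nat.lt_pow_succ_log_self (by norm_num) _

theorem shannonDepth_le (hw : 0 < w) (hwS : w ≤ S) : shannonDepth S w ≤ S := by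
  have := (Nat.log_lt_self 3 (Nat.div_pos hwS hw).ne').trans_le (Nat.div_le_self S w)
  rw [shannonDepth]
  omega

theorem three_mul_shannonDepth_le (hw : 0 < w) (hwS : w ≤ S) :
    (3 * w * shannonDepth S w : ℝ) ≤ 3 * w + 3 / Real.log 3 * (w * Real.log (S / w)) := by
  have hpow : (3 : ℝ) ^ Nat.log 3 (S / w) ≤ S / w := by
    refine le_trans ?_ Nat.cast_div_le
    exact_mod_cast Nat.pow_log_le_self 3 (Nat.div_pos hwS hw).ne'
  have hlog := Real.log_le_log (by positivity) hpow
  rw [Real.log_pow, ← le_div_iff₀ (Real.log_pos (by norm_num))] at hlog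
  have hw' : (0 : ℝ) ≤ 3 * w := by positivity
  calc (3 * w * shannonDepth S w : ℝ) = 3 * w + 3 * w * Nat.log 3 (S / w) := by
        rw [shannonDepth]
        push_cast
        ring
    _ ≤ 3 * w + 3 * w * (Real.log (S / w) / Real.log 3) := by gcongr
    _ = _ := by ring

theorem kraft_sum_shannonDepth_lt {ws : List ℕ} (hpos : ∀ w ∈ ws, 0 < w) (hsum : ws.sum ≤ S) :
    (ws.map fun w => 3 ^ (S - shannonDepth S w)).sum < 3 ^ S := by
  have hterm : ∀ w ∈ ws, (S + 1) * 3 ^ (S - shannonDepth S w) ≤ w * 3 ^ S := by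
    intro w hw
    have hd := shannonDepth_le (hpos w hw) ((List.le_sum_of_mem hw).trans hsum)
    calc (S + 1) * 3 ^ (S - shannonDepth S w)
        ≤ w * 3 ^ shannonDepth S w * 3 ^ (S - shannonDepth S w) :=
          Nat.mul_le_mul_right _ (lt_mul_three_pow_shannonDepth (hpos w hw))
      _ = w * 3 ^ S := by rw [mul_assoc, ← pow_add, Nat.add_sub_cancel' hd]
  have h := List.sum_le_sum hterm
  rw [List.sum_map_mul_left, List.sum_map_mul_right, List.map_id'] at h
  by_contra hge
  have := Nat.mul_le_mul_left (S + 1) (not_lt.mp hge)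
  have := Nat.mul_le_mul_right (3 ^ S) hsum
  have : 0 < 3 ^ S := by positivity
  nlinarith

end Shannon

theorem exists_tree_cost_le_sum_shannonDepth {n : ℕ} (ys : List (Fin n → Bool)) :
    ∃ t : RTree (Fin n → Bool), t.leaves.Perm ys ∧ t.maxdeg ≤ 3 ∧
      t.cost ≤ (ys.map fun y => 3 * hw y * shannonDepth (ys.map hw).sum (hw y)).sum := by
  set S := (ys.map hw).sum
  set P := ys.filter fun y => 0 < hw y
  set Z := ys.filter fun y => !decide (0 < hw y)
  have hZ : (RTree.comb Z).weight = 0 := by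
    simp only [RTree.weight, RTree.leaves_comb, List.sum_eq_zero_iff, List.mem_map]
    rintro _ ⟨y, hy, rfl⟩
    simpa [Z] using (List.mem_filter.mp hy).2
  -- all weightless leaves share one slot at depth `S`
  set L := P.map (fun y => (RTree.leaf y, shannonDepth S (hw y))) ++ [(RTree.comb Z, S)]
  have hkraft : (L.map fun p => 3 ^ (S - p.2)).sum ≤ 3 ^ S := by
    have := kraft_sum_shannonDepth_lt (S := S) (ws := P.map hw)
      (by simp only [P, List.mem_map, List.mem_filter, decide_eq_true_eq]
          rintro _ ⟨y, ⟨-, hy⟩, rfl⟩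
          exact hy)
      (((List.filter_sublist : P.Sublist ys).map hw).sum_le_sum fun _ _ => Nat.zero_le _)
    simp only [L, List.map_append, List.map_map, List.sum_append]
    simp only [Function.comp_def, List.map_map, List.map_cons, List.map_nil, List.sum_cons,
      List.sum_nil, Nat.sub_self, pow_zero, add_zero] at this ⊢
    omega
  have hdegL : ∀ p ∈ L, p.1.maxdeg ≤ 3 := by
    simp only [L, List.mem_append, List.mem_map, List.mem_singleton]
    rintro _ (⟨y, -, rfl⟩ | rfl)
    · simp
    · exact (RTree.maxdeg_comb_le Z).trans (by norm_num)
  obtain ⟨t, hleaves, hdeg, hcost⟩ :=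
    RTree.exists_isKraftTree (r := 3) (by norm_num) S L hdegL hkraft
  refine ⟨t, hleaves.trans ?_, hdeg, hcost.trans ?_⟩
  · simpa [L, Function.comp_def, ← List.flatMap_def] using List.filter_append_perm _ ys
  · simp only [L, List.map_append, List.map_map, List.sum_append, List.map_cons, List.map_nil,
      List.sum_cons, List.sum_nil, hZ, RTree.cost_eq_zero_of_weight_eq_zero hZ]
    simpa [Function.comp_def] using
      ((List.filter_sublist : P.Sublist ys).map _).sum_le_sum fun _ _ => Nat.zero_le _

theorem exists_ternary_tree_cost_le {n : ℕ} (ys : List (Fin n → Bool)) :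
    ∃ t : RTree (Fin n → Bool), t.leaves.Perm ys ∧ t.maxdeg ≤ 3 ∧
      (t.cost : ℝ) ≤ 3 * ((ys.map hw).sum : ℝ)
        + 3 / Real.log 3 * massEntropy (ys.map fun y => (hw y : ℝ)) := by
  obtain ⟨t, hperm, hdeg, hcost⟩ := exists_tree_cost_le_sum_shannonDepth ys
  refine ⟨t, hperm, hdeg, ?_⟩
  set S := (ys.map hw).sum
  have hS : (ys.map fun y => (hw y : ℝ)).sum = S := by
    rw [Nat.cast_list_sum, List.map_map]
    rfl
  have hterm : ∀ y ∈ ys, ((3 * hw y * shannonDepth S (hw y) : ℕ) : ℝ) ≤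
      3 * hw y + 3 / Real.log 3 * (hw y * Real.log (S / hw y)) := by
    intro y hy
    rcases (hw y).eq_zero_or_pos with h0 | hpos
    · simp [h0]
    push_cast
    exact three_mul_shannonDepth_le hpos (List.le_sum_of_mem (List.mem_map_of_mem hy))
  calc (t.cost : ℝ)
      ≤ (ys.map fun y => ((3 * hw y * shannonDepth S (hw y) : ℕ) : ℝ)).sum := by
        have h := Nat.cast_le (α := ℝ) |>.mpr hcost
        rwa [Nat.cast_list_sum, List.map_map] at h
    _ ≤ (ys.map fun y => 3 * (hw y : ℝ) + 3 / Real.log 3 * (hw y * Real.log (S / hw y))).sum :=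
        List.sum_le_sum hterm
    _ = 3 * (S : ℝ) + 3 / Real.log 3 * massEntropy (ys.map fun y => (hw y : ℝ)) := by
        rw [List.sum_map_add, List.sum_map_mul_left, List.sum_map_mul_left, hS, massEntropy, hS,
          List.map_map]
        rfl

theorem mul_div_logb_mul_sum_eq_massEntropy {l : List ℝ} {S b β c : ℝ} (hS : l.sum = S)
    (hb : Real.log b ≠ 0) :
    c * S / Real.logb b β * (l.map fun a => a / S * Real.logb b (a / S)⁻¹).sum =
      c / Real.log β * massEntropy l := by
  rcases eq_or_ne S 0 with rfl | hS0
  · simp [massEntropy, hS]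
  rw [massEntropy, hS, ← List.sum_map_mul_left, ← List.sum_map_mul_left]
  refine congrArg List.sum (List.map_congr_left fun a _ => ?_)
  rw [Real.logb, Real.logb, inv_div]
  field_simp

theorem stmt_12_general (n : ℕ) (ys : List (Fin n → Bool))
    (hmc : ∀ i : Fin n, (ys.countP (fun y => y i)) = 1) :
    ∃ t : RTree (Fin n → Bool), t.leaves.Perm ys ∧ t.maxdeg ≤ 3 ∧
      ((n : ℝ) + t.cost ≤
        (n : ℝ) + (3 * n / Real.logb 2 3) *
          (ys.map (fun y => ((hw y : ℝ) / n) * Real.logb 2 ((hw y : ℝ) / n)⁻¹)).sum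
          + 3 * n) ∧
      ∀ t' : RTree (Fin n → Bool), t'.leaves.Perm ys →
        ((n : ℝ) + t.cost) ≤ ((n : ℝ) + t'.cost) + 3 * n := by
  have hdisj := pairwise_disjoint_boolSupport_of_countP_le_one fun i => (hmc i).le
  have hsum := sum_hw_eq_of_countP_eq_one hmc
  have hentropy := mul_div_logb_mul_sum_eq_massEntropy (l := ys.map fun y => (hw y : ℝ))
    (S := n) (b := 2) (β := 3) (c := 3)
    (by simpa [Function.comp_def] using congrArg (Nat.cast : ℕ → ℝ) hsum)
    (Real.log_pos (by norm_num)).ne'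
  simp only [List.map_map, Function.comp_def] at hentropy
  have hlower : ∀ t' : RTree (Fin n → Bool), t'.leaves.Perm ys →
      3 / Real.log 3 * massEntropy (ys.map fun y => (hw y : ℝ)) ≤ t'.cost := by
    intro t' ht'
    rw [← (ht'.map _).massEntropy_eq]
    exact t'.massEntropy_le_cost (hdisj.perm ht'.symm fun h => h.symm)
  obtain ⟨t, hperm, hdeg, hcost⟩ := exists_ternary_tree_cost_le ys
  rw [hsum] at hcost
  exact ⟨t, hperm, hdeg, by linarith, fun t' ht' => by linarith [hlower t' ht']⟩

/-- Multi-class case (leaf-label columns with disjoint supports covering `[n]`):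
a ternary Huffman tree `T` satisfies `c(T) ≤ n + (3n/log₂3)·H(p₁,…,p_m) + 3n` with
`pⱼ = ‖yⱼ‖₁/n`, and hence `c(T) ≤ min_{T'} c(T') + 3n`. -/
theorem stmt_12 (n : ℕ) (ys : List (Fin n → Bool)) (hm : 2 ≤ ys.length)
    (hmc : ∀ i : Fin n, (ys.countP (fun y => y i)) = 1) :
    ∃ t : RTree (Fin n → Bool), t.leaves.Perm ys ∧ t.maxdeg ≤ 3 ∧
      ((n : ℝ) + t.cost ≤
        (n : ℝ) + (3 * n / Real.logb 2 3) *
          (ys.map (fun y => ((hw y : ℝ) / n) * Real.logb 2 ((hw y : ℝ) / n)⁻¹)).sum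
          + 3 * n) ∧
      ∀ t' : RTree (Fin n → Bool), t'.leaves.Perm ys →
        ((n : ℝ) + t.cost) ≤ ((n : ℝ) + t'.cost) + 3 * n :=
  stmt_12_general n ys hmc
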